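/- Let e_z = (0,0,1) ∈ ℝ³, θ_max ∈ (0, π/2], and let F = {f ∈ ℝ³ : ‖f‖ = 1, fᵀe_z ≥ cos θ_max} be a spherical cap. Given a unit vector s ∈ ℝ³ with s ≠ ±e_z, the point of F maximizing fᵀs is: f* = s if sᵀe_z ≥ cos θ_max; otherwise f* = cos θ_max · e_z + sin θ_max · a/‖a‖, where a = s - (sᵀe_z)e_z. -/

import Mathlib

open Real

/-!
The cap is the closed ball of radius `θmax` about `e_z` for the angular metric on the unit
sphere. When `s` lies outside it, at angle `ψ > θmax` from `e_z`, the triangle inequality for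
angles gives `∠(f, s) ≥ ψ - θmax` for every `f` in the cap, hence `fᵀs ≤ cos (ψ - θmax)`.
Writing `s = cos ψ • e_z + sin ψ • u` with `u = a / ‖a‖`, the candidate
`f* = cos θmax • e_z + sin θmax • u` lies on the same great circle at angle `θmax` from `e_z`,
so `f*ᵀs = cos (ψ - θmax)` and the bound is attained. When `s` lies in the cap,
Cauchy–Schwarz suffices.
-/

open InnerProductGeometry
open scoped RealInnerProductSpace

namespace InnerProductGeometry

variable {V : Type*} [NormedAddCommGroup V] [InnerProductSpace ℝ V] {e s f u : V} {θ : ℝ}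

theorem angle_le_of_cos_le_inner (hf : ‖f‖ = 1) (he : ‖e‖ = 1) (hθ : 0 ≤ θ)
    (h : cos θ ≤ ⟪f, e⟫) : angle f e ≤ θ := by
  by_contra! hlt
  have := cos_lt_cos_of_nonneg_of_le_pi hθ (angle_le_pi f e) hlt
  rw [← inner_eq_cos_angle_of_norm_eq_one hf he] at this
  linarith

theorem le_angle_of_inner_lt_cos (he : ‖e‖ = 1) (hs : ‖s‖ = 1) (hθ : θ ≤ π)
    (h : ⟪e, s⟫ < cos θ) : θ ≤ angle e s := by
  by_contra! hlt
  have := cos_lt_cos_of_nonneg_of_le_pi (angle_nonneg e s) hθ hlt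
  rw [← inner_eq_cos_angle_of_norm_eq_one he hs] at this
  linarith

theorem inner_le_cos_angle_sub_of_angle_le (hf : ‖f‖ = 1) (hs : ‖s‖ = 1)
    (hθs : θ ≤ angle e s) (hfe : angle f e ≤ θ) : ⟪f, s⟫ ≤ cos (angle e s - θ) := by
  rw [inner_eq_cos_angle_of_norm_eq_one hf hs]
  refine cos_le_cos_of_nonneg_of_le_pi (sub_nonneg.2 hθs) (angle_le_pi f s) ?_
  linarith [angle_le_angle_add_angle e f s, angle_comm f e]

theorem inner_cos_smul_add_sin_smul (he : ‖e‖ = 1) (hu : ‖u‖ = 1) (heu : ⟪e, u⟫ = 0)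
    (α β : ℝ) : ⟪cos α • e + sin α • u, cos β • e + sin β • u⟫ = cos (α - β) := by
  simp only [inner_add_left, inner_add_right, real_inner_smul_left, real_inner_smul_right,
    inner_self_eq_one_of_norm_eq_one he, inner_self_eq_one_of_norm_eq_one hu, heu,
    real_inner_comm e u, cos_sub]
  ring

theorem norm_cos_smul_add_sin_smul (he : ‖e‖ = 1) (hu : ‖u‖ = 1) (heu : ⟪e, u⟫ = 0)
    (α : ℝ) : ‖cos α • e + sin α • u‖ = 1 := by
  have := inner_cos_smul_add_sin_smul he hu heu α α
  rwa [sub_self, cos_zero, real_inner_self_eq_norm_sq,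
    pow_eq_one_iff_of_nonneg (norm_nonneg _) two_ne_zero] at this

theorem inner_cos_smul_add_sin_smul_self (he : ‖e‖ = 1) (heu : ⟪e, u⟫ = 0) (α : ℝ) :
    ⟪cos α • e + sin α • u, e⟫ = cos α := by
  rw [inner_add_left, real_inner_smul_left, real_inner_smul_left,
    inner_self_eq_one_of_norm_eq_one he, real_inner_comm, heu, mul_zero, mul_one, add_zero]

theorem norm_sub_inner_smul_sq (he : ‖e‖ = 1) (hs : ‖s‖ = 1) :
    ‖s - ⟪s, e⟫ • e‖ ^ 2 = 1 - ⟪s, e⟫ ^ 2 := by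
  rw [← real_inner_self_eq_norm_sq]
  simp only [inner_sub_left, inner_sub_right, real_inner_smul_left, real_inner_smul_right,
    inner_self_eq_one_of_norm_eq_one he, inner_self_eq_one_of_norm_eq_one hs, real_inner_comm e s]
  ring

theorem sin_angle_eq_norm_sub_inner_smul (he : ‖e‖ = 1) (hs : ‖s‖ = 1) :
    sin (angle e s) = ‖s - ⟪s, e⟫ • e‖ := by
  have := sin_angle_mul_norm_mul_norm e s
  rwa [he, hs, mul_one, mul_one, inner_self_eq_one_of_norm_eq_one he,
    inner_self_eq_one_of_norm_eq_one hs, one_mul, ← sq, real_inner_comm s e,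
    ← norm_sub_inner_smul_sq he hs, sqrt_sq (norm_nonneg _)] at this

theorem sub_inner_smul_ne_zero (he : ‖e‖ = 1) (hs : ‖s‖ = 1) (hse : s ≠ e) (hse' : s ≠ -e) :
    s - ⟪s, e⟫ • e ≠ 0 := by
  intro h
  have hsq := norm_sub_inner_smul_sq he hs
  rw [h, norm_zero] at hsq
  rcases sq_eq_one_iff.1 (by linarith : ⟪s, e⟫ ^ 2 = 1) with h1 | h1
  · exact hse ((inner_eq_one_iff_of_norm_eq_one hs he).1 h1)
  · exact hse' ((inner_eq_neg_one_iff_of_norm_eq_one hs he).1 h1)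

theorem eq_cos_angle_smul_add_sin_angle_smul (he : ‖e‖ = 1) (hs : ‖s‖ = 1) :
    s = cos (angle e s) • e + sin (angle e s) • NormedSpace.normalize (s - ⟪s, e⟫ • e) := by
  rw [sin_angle_eq_norm_sub_inner_smul he hs, NormedSpace.norm_smul_normalize,
    ← inner_eq_cos_angle_of_norm_eq_one he hs, real_inner_comm, add_sub_cancel]

theorem inner_normalize_sub_inner_smul (he : ‖e‖ = 1) (s : V) :
    ⟪e, NormedSpace.normalize (s - ⟪s, e⟫ • e)⟫ = 0 := by
  rw [NormedSpace.normalize, real_inner_smul_right, inner_sub_right, real_inner_smul_right,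
    inner_self_eq_one_of_norm_eq_one he, real_inner_comm, mul_one, sub_self, mul_zero]

theorem inner_le_inner_cos_smul_add_sin_smul (he : ‖e‖ = 1) (hs : ‖s‖ = 1) (hf : ‖f‖ = 1)
    (ha : s - ⟪s, e⟫ • e ≠ 0) (hθ₀ : 0 ≤ θ) (hθπ : θ ≤ π) (hs_out : ⟪s, e⟫ < cos θ)
    (hf_in : cos θ ≤ ⟪f, e⟫) :
    ⟪f, s⟫ ≤ ⟪cos θ • e + sin θ • NormedSpace.normalize (s - ⟪s, e⟫ • e), s⟫ := by
  have hs_circle := eq_cos_angle_smul_add_sin_angle_smul he hs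
  set u := NormedSpace.normalize (s - ⟪s, e⟫ • e)
  calc ⟪f, s⟫ ≤ cos (angle e s - θ) :=
        inner_le_cos_angle_sub_of_angle_le hf hs
          (le_angle_of_inner_lt_cos he hs hθπ (by rwa [real_inner_comm]))
          (angle_le_of_cos_le_inner hf he hθ₀ hf_in)
    _ = ⟪cos θ • e + sin θ • u, cos (angle e s) • e + sin (angle e s) • u⟫ := by
        rw [inner_cos_smul_add_sin_smul he (NormedSpace.norm_normalize_eq_one_iff.2 ha)
          (inner_normalize_sub_inner_smul he s), ← cos_neg, neg_sub]
    _ = ⟪cos θ • e + sin θ • u, s⟫ := by rw [← hs_circle]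

end InnerProductGeometry

theorem stmt_12_general (θmax : ℝ) (hθ : θmax ∈ Set.Ioc 0 (Real.pi / 2))
    (ez s : EuclideanSpace ℝ (Fin 3))
    (hez : ez = ![(0 : ℝ), 0, 1]) (hs : ‖s‖ = 1) (hs2 : s ≠ -ez)
    (a : EuclideanSpace ℝ (Fin 3)) (ha : a = s - (inner ℝ s ez : ℝ) • ez)
    (fstar : EuclideanSpace ℝ (Fin 3))
    (hf : fstar = if Real.cos θmax ≤ (inner ℝ s ez : ℝ) then s
      else Real.cos θmax • ez + Real.sin θmax • (‖a‖⁻¹ • a)) :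
    (‖fstar‖ = 1 ∧ Real.cos θmax ≤ (inner ℝ fstar ez : ℝ)) ∧
    ∀ f : EuclideanSpace ℝ (Fin 3), ‖f‖ = 1 → Real.cos θmax ≤ (inner ℝ f ez : ℝ) →
      (inner ℝ f s : ℝ) ≤ (inner ℝ fstar s : ℝ) := by
  obtain ⟨hθ0, hθπ⟩ := hθ
  have he : ‖ez‖ = 1 := by simp [EuclideanSpace.norm_eq, hez, Fin.sum_univ_three]
  subst a
  split_ifs at hf with hcap
  · subst fstar
    refine ⟨⟨hs, hcap⟩, fun f hf _ => ?_⟩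
    rw [inner_self_eq_one_of_norm_eq_one hs]
    simpa [hf, hs] using real_inner_le_norm f s
  push Not at hcap
  have hse : s ≠ ez := by
    rintro rfl
    rw [inner_self_eq_one_of_norm_eq_one hs] at hcap
    linarith [cos_le_one θmax]
  have ha := sub_inner_smul_ne_zero he hs hse hs2
  have heu := inner_normalize_sub_inner_smul he s
  change fstar = cos θmax • ez + sin θmax • NormedSpace.normalize (s - ⟪s, ez⟫ • ez) at hf
  subst fstar
  exact ⟨⟨norm_cos_smul_add_sin_smul he (NormedSpace.norm_normalize_eq_one_iff.2 ha) heu θmax,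
    (inner_cos_smul_add_sin_smul_self he heu θmax).ge⟩, fun f hf hfe =>
    inner_le_inner_cos_smul_add_sin_smul he hs hf ha hθ0.le (by linarith [pi_pos]) hcap hfe⟩

/-- projection of a unit vector `s` onto the spherical cap
`F = {f : ‖f‖ = 1, fᵀe_z ≥ cos θ_max}` maximizes the linear functional `f ↦ fᵀs`. -/
theorem stmt_12 (θmax : ℝ) (hθ : θmax ∈ Set.Ioc 0 (Real.pi / 2))
    (ez s : EuclideanSpace ℝ (Fin 3))
    (hez : ez = ![(0 : ℝ), 0, 1]) (hs : ‖s‖ = 1) (hs1 : s ≠ ez) (hs2 : s ≠ -ez)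
    (a : EuclideanSpace ℝ (Fin 3)) (ha : a = s - (inner ℝ s ez : ℝ) • ez)
    (fstar : EuclideanSpace ℝ (Fin 3))
    (hf : fstar = if Real.cos θmax ≤ (inner ℝ s ez : ℝ) then s
      else Real.cos θmax • ez + Real.sin θmax • (‖a‖⁻¹ • a)) :
    (‖fstar‖ = 1 ∧ Real.cos θmax ≤ (inner ℝ fstar ez : ℝ)) ∧
    ∀ f : EuclideanSpace ℝ (Fin 3), ‖f‖ = 1 → Real.cos θmax ≤ (inner ℝ f ez : ℝ) →
      (inner ℝ f s : ℝ) ≤ (inner ℝ fstar s : ℝ) :=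
  stmt_12_general θmax hθ ez s hez hs hs2 a ha fstar hf
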